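/- Let E be a directed graph, K a field, c a simple closed path in E, and a ∈ (K^*)^{E^1}. Then the twisted Chen module V^a_{[c^∞]} is a simple L_K(E)-module. -/

import Mathlib

open scoped Classical

/-- A directed graph: vertices, edges, source and range maps. -/
structure DirGraph : Type 1 where
  V : Type
  E : Type
  s : E → V
  r : E → V

namespace DirGraph

variable (G : DirGraph)

/-- A finite path: a source vertex together with a compatible list of edges
(the empty list gives the path of length 0 at `src`). -/
structure FinPath where
  src : G.V
  edges : List G.E
  src_eq : ∀ e ∈ edges.head?, G.s e = src
  chain : edges.Chain' (fun e f => G.r e = G.s f)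

variable {G}

/-- The range of a finite path. -/
def FinPath.rng (μ : G.FinPath) : G.V :=
  ((μ.edges.getLast?).map G.r).getD μ.src

/-- The length of a finite path. -/
def FinPath.length (μ : G.FinPath) : ℕ := μ.edges.length

variable (G)

/-- An infinite path. -/
structure InfPath where
  edges : ℕ → G.E
  chain : ∀ n, G.r (edges n) = G.s (edges (n + 1))

/-- The source of an infinite path. -/
def InfPath.src {G : DirGraph} (p : G.InfPath) : G.V := G.s (p.edges 0)

def IsSink (v : G.V) : Prop := ∀ e, G.s e ≠ v

def IsInfEmitter (v : G.V) : Prop := {e | G.s e = v}.Infinite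

def IsSingular (v : G.V) : Prop := IsSink G v ∨ IsInfEmitter G v

/-- Boundary paths: infinite paths, together with finite paths ending in a singular vertex. -/
def BPath : Type := {x : G.FinPath ⊕ G.InfPath // ∀ μ, x = Sum.inl μ → IsSingular G μ.rng}

variable {G}

/-- The source of a boundary path. -/
def BPath.src (x : G.BPath) : G.V :=
  match x.1 with
  | Sum.inl μ => μ.src
  | Sum.inr p => p.src

def BPath.IsInfinite (x : G.BPath) : Prop := ∃ p, x.1 = Sum.inr p

/-- `IsCat μ p x` means `x = μ p`, i.e. `x` is the concatenation of the finite path `μ`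
with the boundary path `p` (in particular `r(μ) = s(p)`). -/
def IsCat (μ : G.FinPath) (p x : G.BPath) : Prop :=
  μ.rng = p.src ∧
  match p.1, x.1 with
  | Sum.inl q, Sum.inl ξ => ξ.src = μ.src ∧ ξ.edges = μ.edges ++ q.edges
  | Sum.inr q, Sum.inr ξ =>
      (∀ (i : ℕ) (h : i < μ.edges.length), ξ.edges i = μ.edges.get ⟨i, h⟩) ∧
      (∀ i : ℕ, ξ.edges (μ.edges.length + i) = q.edges i)
  | _, _ => False

/-- `x ∼_k y` : tail equivalence with lag `k`. -/
def TailEqLag (x y : G.BPath) (k : ℤ) : Prop :=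
  ∃ (μ ν : G.FinPath) (p : G.BPath),
    IsCat μ p x ∧ IsCat ν p y ∧ (μ.length : ℤ) - (ν.length : ℤ) = k

/-- Tail equivalence. -/
def TailEq (x y : G.BPath) : Prop := ∃ k, TailEqLag x y k

/-- The tail-equivalence class (orbit) of a boundary path. -/
def orbit (x : G.BPath) : Set G.BPath := {y | TailEq y x}

/-- A closed path: positive length, same source and range. -/
def FinPath.IsClosed (c : G.FinPath) : Prop := 0 < c.length ∧ c.rng = c.src

/-- A boundary path is rational if it is tail equivalent to `c^∞` for some closed path `c`;
here `c^∞` is characterized as the unique boundary path `p` with `p = c p`. -/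
def IsRational (x : G.BPath) : Prop :=
  ∃ (c : G.FinPath) (p : G.BPath), 0 < c.length ∧ IsCat c p p ∧ TailEq x p

/-- A simple closed path: a closed path which is not a proper power of a closed path. -/
def FinPath.IsSimpleClosed (c : G.FinPath) : Prop :=
  c.IsClosed ∧
    ¬ ∃ (d : G.FinPath) (n : ℕ), 2 ≤ n ∧ d.IsClosed ∧ c.src = d.src ∧
        c.edges = (List.replicate n d.edges).flatten

/-- A cycle: a closed path passing through no vertex twice. -/
def FinPath.IsCycle (c : G.FinPath) : Prop := c.IsClosed ∧ (c.edges.map G.s).Nodup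

/-- An exit for a finite path. -/
def FinPath.HasExit (c : G.FinPath) : Prop :=
  ∃ (i : ℕ) (h : i < c.edges.length) (e : G.E),
    G.s e = G.s (c.edges.get ⟨i, h⟩) ∧ e ≠ c.edges.get ⟨i, h⟩

/-- `c` is a rotation of `d`. -/
def FinPath.IsRotationOf (c d : G.FinPath) : Prop := ∃ i, c.edges = d.edges.rotate i

/-- A maximal cycle: a cycle such that any cycle from which there is a finite path to its
source is a rotation of it. -/
def FinPath.IsMaxCycle (c : G.FinPath) : Prop :=
  c.IsCycle ∧ ∀ d : G.FinPath, d.IsCycle →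
    (∃ μ : G.FinPath, μ.src = d.src ∧ μ.rng = c.src) → d.IsRotationOf c

/-- A maximal sink: a sink with no finite path from the source of any cycle to it. -/
def IsMaxSink (G : DirGraph) (v : G.V) : Prop :=
  IsSink G v ∧ ¬ ∃ (d μ : G.FinPath), d.IsCycle ∧ μ.src = d.src ∧ μ.rng = v

/-- A graph is row-finite if every vertex emits finitely many edges. -/
def RowFinite (G : DirGraph) : Prop := ∀ v : G.V, {e | G.s e = v}.Finite

/-- The set of predecessors of a vertex. -/
def preds (G : DirGraph) (v : G.V) : Set G.V := {w | ∃ μ : G.FinPath, μ.src = w ∧ μ.rng = v}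

/-- The finite path of length 0 at a vertex. -/
def vertexPath (G : DirGraph) (v : G.V) : G.FinPath :=
  ⟨v, [], by intro e he; simp at he, List.isChain_nil⟩

/-- A singular vertex, seen as a boundary path. -/
def vertexBPath (G : DirGraph) (v : G.V) (h : IsSingular G v) : G.BPath :=
  ⟨Sum.inl (vertexPath G v), by
    intro μ hμ
    injection hμ with h2
    subst h2
    exact h⟩

/-- The finite path consisting of a single edge. -/
def singleE (G : DirGraph) (e : G.E) : G.FinPath :=
  ⟨G.s e, [e], by
    intro f hf
    simp only [List.head?_cons, Option.mem_def, Option.some.injEq] at hf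
    subst hf
    rfl, List.isChain_singleton e⟩

/-- `a_μ`: the product of the values of `a` along a finite path. -/
def aval {G : DirGraph} {K : Type} [Field K] (a : G.E → K) (μ : G.FinPath) : K :=
  (μ.edges.map a).prod

/-! ## The Leavitt path algebra -/

/-- Generators of the Leavitt path algebra: vertices, edges and ghost edges. -/
inductive Gen (G : DirGraph) : Type
  | vtx : G.V → Gen G
  | edg : G.E → Gen G
  | ghd : G.E → Gen G

/-- The defining relations of the Leavitt path algebra. -/
inductive LRel (G : DirGraph) (K : Type) [Field K] :
    FreeAlgebra K (Gen G) → FreeAlgebra K (Gen G) → Prop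
  | vv_eq (v : G.V) :
      LRel G K (FreeAlgebra.ι K (Gen.vtx v) * FreeAlgebra.ι K (Gen.vtx v))
        (FreeAlgebra.ι K (Gen.vtx v))
  | vv_ne {v w : G.V} (h : v ≠ w) :
      LRel G K (FreeAlgebra.ι K (Gen.vtx v) * FreeAlgebra.ι K (Gen.vtx w)) 0
  | e1l (e : G.E) :
      LRel G K (FreeAlgebra.ι K (Gen.vtx (G.s e)) * FreeAlgebra.ι K (Gen.edg e))
        (FreeAlgebra.ι K (Gen.edg e))
  | e1r (e : G.E) :
      LRel G K (FreeAlgebra.ι K (Gen.edg e) * FreeAlgebra.ι K (Gen.vtx (G.r e)))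
        (FreeAlgebra.ι K (Gen.edg e))
  | e2l (e : G.E) :
      LRel G K (FreeAlgebra.ι K (Gen.vtx (G.r e)) * FreeAlgebra.ι K (Gen.ghd e))
        (FreeAlgebra.ι K (Gen.ghd e))
  | e2r (e : G.E) :
      LRel G K (FreeAlgebra.ι K (Gen.ghd e) * FreeAlgebra.ι K (Gen.vtx (G.s e)))
        (FreeAlgebra.ι K (Gen.ghd e))
  | ck1_eq (e : G.E) :
      LRel G K (FreeAlgebra.ι K (Gen.ghd e) * FreeAlgebra.ι K (Gen.edg e))
        (FreeAlgebra.ι K (Gen.vtx (G.r e)))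
  | ck1_ne {e f : G.E} (h : e ≠ f) :
      LRel G K (FreeAlgebra.ι K (Gen.ghd e) * FreeAlgebra.ι K (Gen.edg f)) 0
  | ck2 (v : G.V) (hfin : {e | G.s e = v}.Finite) (hne : ∃ e, G.s e = v) :
      LRel G K (FreeAlgebra.ι K (Gen.vtx v))
        (∑ e ∈ hfin.toFinset, FreeAlgebra.ι K (Gen.edg e) * FreeAlgebra.ι K (Gen.ghd e))

/-- The Leavitt path algebra of `G` over `K`. -/
abbrev LPA (G : DirGraph) (K : Type) [Field K] : Type := RingQuot (LRel G K)

/-- The image of a vertex in the Leavitt path algebra. -/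
def ofV (G : DirGraph) (K : Type) [Field K] (v : G.V) : LPA G K :=
  RingQuot.mkAlgHom K (LRel G K) (FreeAlgebra.ι K (Gen.vtx v))

/-- The image of an edge in the Leavitt path algebra. -/
def ofE (G : DirGraph) (K : Type) [Field K] (e : G.E) : LPA G K :=
  RingQuot.mkAlgHom K (LRel G K) (FreeAlgebra.ι K (Gen.edg e))

/-- The image of a ghost edge in the Leavitt path algebra. -/
def ofG (G : DirGraph) (K : Type) [Field K] (e : G.E) : LPA G K :=
  RingQuot.mkAlgHom K (LRel G K) (FreeAlgebra.ι K (Gen.ghd e))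

/-- The element `μ` of the Leavitt path algebra associated to a finite path `μ`. -/
def pathElem (G : DirGraph) (K : Type) [Field K] (μ : G.FinPath) : LPA G K :=
  ofV G K μ.src * (μ.edges.map (ofE G K)).prod

/-- The element `μ^*` of the Leavitt path algebra associated to a finite path `μ`. -/
def pathStarElem (G : DirGraph) (K : Type) [Field K] (μ : G.FinPath) : LPA G K :=
  (μ.edges.reverse.map (ofG G K)).prod * ofV G K μ.src

/-- The degree-`n` homogeneous component of the canonical `ℤ`-grading of the Leavitt
path algebra: the span of the monomials `μ ν^*` with `|μ| - |ν| = n`. -/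
def LPAdeg (G : DirGraph) (K : Type) [Field K] (n : ℤ) : Submodule K (LPA G K) :=
  Submodule.span K {x | ∃ μ ν : G.FinPath, μ.rng = ν.rng ∧
    (μ.length : ℤ) - (ν.length : ℤ) = n ∧ x = pathElem G K μ * pathStarElem G K ν}

/-- `W` is a `ℤ`-grading making `M` a graded module over the canonically graded
Leavitt path algebra. -/
def IsModuleGrading (G : DirGraph) (K : Type) [Field K] (M : Type) [AddCommGroup M]
    [Module K M] [Module (LPA G K) M] (W : ℤ → Submodule K M) : Prop :=
  DirectSum.IsInternal W ∧
    ∀ (m k : ℤ) (a : LPA G K) (y : M), a ∈ LPAdeg G K m → y ∈ W k → a • y ∈ W (m + k)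

/-- A set is graded (with respect to a grading `W`) if each of its elements is a finite sum
of homogeneous elements of the set. -/
def GradedCarrier {K M : Type} [Field K] [AddCommGroup M] [Module K M]
    (W : ℤ → Submodule K M) (S : Set M) : Prop :=
  ∀ m ∈ S, ∃ l : List M, (∀ z ∈ l, z ∈ S ∧ ∃ k, z ∈ W k) ∧ l.sum = m

/-- A graded isomorphism between graded modules over the Leavitt path algebra. -/
def GradedIsoLPA (G : DirGraph) (K : Type) [Field K] (M N : Type)
    [AddCommGroup M] [AddCommGroup N] [Module K M] [Module K N]
    [Module (LPA G K) M] [Module (LPA G K) N]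
    (W : ℤ → Submodule K M) (W' : ℤ → Submodule K N) : Prop :=
  ∃ f : M ≃ₗ[LPA G K] N, (∀ k, ∀ m ∈ W k, f m ∈ W' k) ∧ ∀ k, ∀ n ∈ W' k, f.symm n ∈ W k

/-- A module over the Leavitt path algebra is unital if it is generated by the images of the
vertices. -/
def IsUnitalModule (G : DirGraph) (K : Type) [Field K] (M : Type) [AddCommGroup M]
    [Module (LPA G K) M] : Prop :=
  ∀ m : M, m ∈ Submodule.span (LPA G K) {y : M | ∃ (v : G.V) (m' : M), y = ofV G K v • m'}

/-! ## Chen modules, specified by a basis and the action of the generators -/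

/-- A specification of the (twisted) Chen module attached to a boundary path `x`:
an `L_K(E)`-module `M` which is a `K'`-vector space with basis the tail-equivalence class
of `x`, the generators acting by the τ-twisted shift formulas. Here `K ⊆ K'` is a field
extension and `τ : E¹ → K'` is a family of nonzero scalars. -/
structure ChenSpecT (G : DirGraph) (K K' : Type) [Field K] [Field K'] [Algebra K K']
    (τ : G.E → K') (x : G.BPath) (M : Type) [AddCommGroup M] [Module K' M]
    [Module (LPA G K) M] : Type where
  tau_ne : ∀ e, τ e ≠ 0
  basis : Module.Basis (orbit x) K' M
  act_v : ∀ (v : G.V) (p : orbit x),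
    ofV G K v • basis p = if v = BPath.src (p : G.BPath) then basis p else 0
  act_e : ∀ (e : G.E) (p q : orbit x), IsCat (singleE G e) (p : G.BPath) (q : G.BPath) →
    ofE G K e • basis p = τ e • basis q
  act_e_zero : ∀ (e : G.E) (p : orbit x),
    (¬ ∃ q : G.BPath, IsCat (singleE G e) (p : G.BPath) q) → ofE G K e • basis p = 0
  act_g : ∀ (e : G.E) (p q : orbit x), IsCat (singleE G e) (p : G.BPath) (q : G.BPath) →
    ofG G K e • basis q = (τ e)⁻¹ • basis p
  act_g_zero : ∀ (e : G.E) (q : orbit x),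
    (¬ ∃ p : G.BPath, IsCat (singleE G e) p (q : G.BPath)) → ofG G K e • basis q = 0

/-- Specification of the Chen module `V_{[x]}^a` twisted by `a : E¹ → K^*`
(`a = 1` gives `V_{[x]}`). -/
abbrev ChenSpec (G : DirGraph) (K : Type) [Field K] (a : G.E → K) (x : G.BPath) (M : Type)
    [AddCommGroup M] [Module K M] [Module (LPA G K) M] : Type :=
  ChenSpecT G K K a x M

/-- The canonical grading on a Chen module: the degree-`k` component is spanned by the basis
elements tail-equivalent to `x` with lag `k`. -/
def chenW {G : DirGraph} {K' : Type} [Field K'] {x : G.BPath} {M : Type}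
    [AddCommGroup M] [Module K' M] (b : Module.Basis (orbit x) K' M) (k : ℤ) : Submodule K' M :=
  Submodule.span K' (⇑b '' {p : orbit x | TailEqLag (p : G.BPath) x k})

/-! ## The module `K L_x` -/

/-- The set `L_x` of pairs `(y, k)` with `y ∼_k x`. -/
def Lset (G : DirGraph) (x : G.BPath) : Set (G.BPath × ℤ) := {yk | TailEqLag yk.1 x yk.2}

/-- The underlying `K`-vector space of the module `K L_x`, with basis `L_x`. -/
abbrev KLCarrier (G : DirGraph) (K : Type) [Field K] (x : G.BPath) : Type := (Lset G x) →₀ K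

/-- Specification of the `L_K(E)`-module structure on `K L_x`, given by
`(μ ν^*) ⬝ (y, k) = (μ p, |μ| - |ν| + k)` when `y = ν p`, and `0` otherwise. The module
structure is encoded as a `K`-algebra homomorphism `ρ` to the endomorphism algebra. -/
def KLSpec (G : DirGraph) (K : Type) [Field K] (x : G.BPath)
    (ρ : LPA G K →ₐ[K] Module.End K (KLCarrier G K x)) : Prop :=
  (∀ (μ ν : G.FinPath), μ.rng = ν.rng → ∀ (yk zk : Lset G x) (p : G.BPath),
      IsCat ν p (yk : G.BPath × ℤ).1 → IsCat μ p (zk : G.BPath × ℤ).1 →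
      (zk : G.BPath × ℤ).2 = (yk : G.BPath × ℤ).2 + (μ.length : ℤ) - (ν.length : ℤ) →
      ρ (pathElem G K μ * pathStarElem G K ν) (Finsupp.single yk 1) = Finsupp.single zk 1) ∧
  (∀ (μ ν : G.FinPath), μ.rng = ν.rng → ∀ yk : Lset G x,
      (¬ ∃ p : G.BPath, IsCat ν p (yk : G.BPath × ℤ).1) →
      ρ (pathElem G K μ * pathStarElem G K ν) (Finsupp.single yk 1) = 0)

/-- The canonical grading of `K L_x`: `(y, k)` is homogeneous of degree `k`. -/
noncomputable def KLgr (G : DirGraph) (K : Type) [Field K] (x : G.BPath) (k : ℤ) :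
    Submodule K (KLCarrier G K x) :=
  Submodule.span K {m | ∃ yk : Lset G x, (yk : G.BPath × ℤ).2 = k ∧ m = Finsupp.single yk 1}

end DirGraph

/-!
Every path tail-equivalent to `c^∞` is infinite. Let `N` be a nonzero submodule and `m ∈ N`
nonzero. If two basis paths in the support of `m` first differ at position `n`, applying the
ghost edges `e₀^*, …, eₙ^*` of the first one keeps a nonzero coefficient but kills the second,
and no coefficients are created, so the support shrinks; hence `N` contains a basis vector.
As `e` and `e^*` move the basis vectors `p` and `ep` into each other up to nonzero scalars,
and tail equivalence is generated by such moves, `N` then contains every basis vector.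
-/

namespace DirGraph

variable {G : DirGraph}

namespace FinPath

theorem ext {μ ν : G.FinPath} (hsrc : μ.src = ν.src) (hedges : μ.edges = ν.edges) :
    μ = ν := by
  cases μ; cases ν; cases hsrc; cases hedges; rfl

theorem rng_of_edges_eq_nil {μ : G.FinPath} (h : μ.edges = []) : μ.rng = μ.src := by
  simp [rng, h]

theorem rng_of_getLast?_eq {μ : G.FinPath} {e : G.E} (h : μ.edges.getLast? = some e) :
    μ.rng = G.r e := by
  simp [rng, h]

theorem rng_eq_of_getLast?_eq {μ ν : G.FinPath} (hμ : μ.edges ≠ [])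
    (h : μ.edges.getLast? = ν.edges.getLast?) : μ.rng = ν.rng := by
  obtain ⟨e, he⟩ := Option.ne_none_iff_exists'.mp (List.getLast?_eq_none_iff.not.mpr hμ)
  rw [rng_of_getLast?_eq he, rng_of_getLast?_eq (h ▸ he)]

def tail (μ : G.FinPath) (e : G.E) (es : List G.E) (h : μ.edges = e :: es) : G.FinPath :=
  have hchain := List.isChain_cons.mp (h ▸ μ.chain)
  ⟨G.r e, es, fun f hf => (hchain.1 f hf).symm, hchain.2⟩

@[simp] theorem tail_edges (μ : G.FinPath) (e es) (h : μ.edges = e :: es) :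
    (μ.tail e es h).edges = es := rfl

theorem tail_rng (μ : G.FinPath) (e es) (h : μ.edges = e :: es) :
    (μ.tail e es h).rng = μ.rng := by
  cases es with
  | nil => rw [rng_of_edges_eq_nil rfl, rng_of_getLast?_eq (e := e) (by rw [h]; rfl)]; rfl
  | cons f fs =>
    exact rng_eq_of_getLast?_eq (List.cons_ne_nil _ _) (by simp [h, List.getLast?_cons_cons])

def append (μ ν : G.FinPath) (h : μ.rng = ν.src) : G.FinPath where
  src := μ.src
  edges := μ.edges ++ ν.edges
  src_eq f hf := by
    cases hμ : μ.edges with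
    | nil =>
      rw [hμ, List.nil_append] at hf
      rw [ν.src_eq f hf, ← h, rng_of_edges_eq_nil hμ]
    | cons g gs =>
      rw [hμ, List.cons_append, List.head?_cons, Option.mem_def, Option.some.injEq] at hf
      exact hf ▸ μ.src_eq g (by rw [hμ]; rfl)
  chain := μ.chain.append ν.chain fun x hx y hy => by
    rw [← rng_of_getLast?_eq hx, h, ← ν.src_eq y hy]

@[simp] theorem append_edges (μ ν : G.FinPath) (h) :
    (μ.append ν h).edges = μ.edges ++ ν.edges := rfl

@[simp] theorem append_src (μ ν : G.FinPath) (h) : (μ.append ν h).src = μ.src := rfl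

theorem append_rng (μ ν : G.FinPath) (h) : (μ.append ν h).rng = ν.rng := by
  by_cases hν : ν.edges = []
  · rw [rng_of_edges_eq_nil hν, ← h]
    simp only [rng, append_edges, hν, List.append_nil, append_src]
  · exact rng_eq_of_getLast?_eq (by simp [hν]) (List.getLast?_append_of_ne_nil _ hν)

end FinPath

@[simp] theorem singleE_edges (e : G.E) : (singleE G e).edges = [e] := rfl

theorem InfPath.ext {p q : G.InfPath} (h : p.edges = q.edges) : p = q := by
  cases p; cases q; cases h; rfl

def InfPath.tail (w : G.InfPath) : G.InfPath :=
  ⟨fun k => w.edges (k + 1), fun k => w.chain (k + 1)⟩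

theorem exists_isCat (μ : G.FinPath) (p : G.BPath) (h : μ.rng = p.src) :
    ∃ x, IsCat μ p x := by
  obtain ⟨q | w, hp⟩ := p
  · refine ⟨⟨Sum.inl (μ.append q h), ?_⟩, h, rfl, rfl⟩
    rintro ξ ⟨⟩
    exact μ.append_rng q h ▸ hp q rfl
  · let n := μ.edges.length
    refine ⟨⟨Sum.inr ⟨fun i => if hi : i < n then μ.edges[i] else w.edges (i - n), ?_⟩,
      fun ξ hξ => by cases hξ⟩, h, fun i hi => dif_pos hi, fun i => ?_⟩
    · intro i
      by_cases h₁ : i + 1 < n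
      · rw [dif_pos (Nat.lt_of_succ_lt h₁), dif_pos h₁]
        exact List.isChain_iff_getElem.mp μ.chain i h₁
      by_cases h₂ : i < n
      · have hlast : μ.edges.getLast? = some μ.edges[i] := by
          rw [List.getLast?_eq_getElem?, show n - 1 = i by omega, List.getElem?_eq_getElem h₂]
        rw [dif_pos h₂, dif_neg h₁, ← FinPath.rng_of_getLast?_eq hlast, h,
          show i + 1 - n = 0 by omega]
        rfl
      · rw [dif_neg h₂, dif_neg h₁, show i + 1 - n = i - n + 1 by omega]
        exact w.chain (i - n)
    · simp [n]

namespace IsCat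

theorem src_eq {μ : G.FinPath} {p x : G.BPath} (h : IsCat μ p x) : x.src = μ.src := by
  obtain ⟨p | p, _⟩ := p <;> obtain ⟨ξ | ξ, _⟩ := x <;> obtain ⟨hr, hm⟩ := h
  all_goals first | exact hm.elim | skip
  · exact hm.1
  show G.s (ξ.edges 0) = μ.src
  cases hμ : μ.edges with
  | nil =>
    have h0 := hm.2 0
    simp only [hμ, List.length_nil, Nat.zero_add] at h0
    rw [h0]
    exact hr.symm.trans (μ.rng_of_edges_eq_nil hμ)
  | cons e es => rw [hm.1 0 (by simp [hμ])]; exact μ.src_eq _ (by simp [hμ])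

theorem self_of_edges_eq_nil {μ : G.FinPath} (hμ : μ.edges = []) {p : G.BPath}
    (h : μ.rng = p.src) : IsCat μ p p := by
  refine ⟨h, ?_⟩
  obtain ⟨q | q, _⟩ := p
  · exact ⟨(μ.rng_of_edges_eq_nil hμ ▸ h).symm, by rw [hμ, List.nil_append]⟩
  · exact ⟨fun i hi => by simp [hμ] at hi, fun i => by simp [hμ]⟩

theorem concat_unique {μ : G.FinPath} {p x x' : G.BPath} (h : IsCat μ p x)
    (h' : IsCat μ p x') : x = x' := by
  obtain ⟨q | q, _⟩ := p <;> obtain ⟨ξ | ξ, _⟩ := x <;>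
    obtain ⟨ξ' | ξ', _⟩ := x' <;> obtain ⟨-, hm⟩ := h <;> obtain ⟨-, hm'⟩ := h'
  all_goals first | exact hm.elim | exact hm'.elim | skip
  · exact Subtype.ext (congrArg Sum.inl
      (FinPath.ext (hm.1.trans hm'.1.symm) (hm.2.trans hm'.2.symm)))
  · refine Subtype.ext (congrArg Sum.inr (InfPath.ext (funext fun n => ?_)))
    by_cases hn : n < μ.edges.length
    · rw [hm.1 n hn, hm'.1 n hn]
    · obtain ⟨k, rfl⟩ := Nat.exists_eq_add_of_le (Nat.le_of_not_lt hn)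
      rw [hm.2, hm'.2]

theorem tail_unique {μ : G.FinPath} {p p' x : G.BPath} (h : IsCat μ p x)
    (h' : IsCat μ p' x) : p = p' := by
  obtain ⟨ξ | ξ, _⟩ := x <;> obtain ⟨q | q, _⟩ := p <;> obtain ⟨q' | q', _⟩ := p' <;>
    obtain ⟨hr, hm⟩ := h <;> obtain ⟨hr', hm'⟩ := h'
  all_goals first | exact hm.elim | exact hm'.elim | skip
  · exact Subtype.ext (congrArg Sum.inl (FinPath.ext (hr.symm.trans hr')
      (List.append_cancel_left (hm.2.symm.trans hm'.2))))
  · exact Subtype.ext (congrArg Sum.inr (InfPath.ext (funext fun n =>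
      (hm.2 n).symm.trans (hm'.2 n))))

theorem append {μ ν : G.FinPath} {p q x : G.BPath} (h₁ : IsCat μ p x) (h₂ : IsCat ν q p)
    (hs : μ.rng = ν.src) : IsCat (μ.append ν hs) q x := by
  refine ⟨(μ.append_rng ν hs).trans h₂.1, ?_⟩
  obtain ⟨w | w, _⟩ := q <;> obtain ⟨u | u, _⟩ := p <;> obtain ⟨ξ | ξ, _⟩ := x <;>
    obtain ⟨-, hm₁⟩ := h₁ <;> obtain ⟨-, hm₂⟩ := h₂
  all_goals first | exact hm₁.elim | exact hm₂.elim | skip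
  · exact ⟨hm₁.1, by rw [hm₁.2, hm₂.2, FinPath.append_edges, List.append_assoc]⟩
  · refine ⟨fun i hi => ?_, fun i => ?_⟩
    · simp only [FinPath.append_edges, List.get_eq_getElem] at hi ⊢
      by_cases h : i < μ.edges.length
      · rw [hm₁.1 i h, List.getElem_append_left h]; rfl
      · obtain ⟨k, rfl⟩ := Nat.exists_eq_add_of_le (Nat.le_of_not_lt h)
        rw [hm₁.2, hm₂.1 k (by simp at hi; omega), List.getElem_append_right (by omega)]
        simp
    · show ξ.edges ((μ.edges ++ ν.edges).length + i) = w.edges i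
      rw [List.length_append, Nat.add_assoc, hm₁.2, hm₂.2]

theorem eq_of_edges_eq_nil {μ : G.FinPath} {p x : G.BPath} (h : IsCat μ p x)
    (hμ : μ.edges = []) : x = p :=
  h.concat_unique (self_of_edges_eq_nil hμ h.1)

theorem exists_tail {μ : G.FinPath} {t x : G.BPath} (h : IsCat μ t x) {e : G.E}
    {es : List G.E} (hμ : μ.edges = e :: es) :
    ∃ x', IsCat (μ.tail e es hμ) t x' ∧ IsCat (singleE G e) x' x := by
  obtain ⟨x', hx'⟩ := exists_isCat _ t ((μ.tail_rng e es hμ).trans h.1)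
  have hs : (singleE G e).rng = (μ.tail e es hμ).src := rfl
  obtain ⟨x'', hx''⟩ := exists_isCat (singleE G e) x' hx'.src_eq.symm
  have happ : (singleE G e).append (μ.tail e es hμ) hs = μ :=
    FinPath.ext (μ.src_eq e (by simp [hμ])) (by simp [hμ])
  refine ⟨x', hx', ?_⟩
  rwa [← (happ ▸ hx''.append hx' hs : IsCat μ t x'').concat_unique h]

theorem singleE_inj {e e' : G.E} {p p' q : G.BPath} (h : IsCat (singleE G e) p q)
    (h' : IsCat (singleE G e') p' q) : e = e' ∧ p = p' := by
  suffices he : e = e' by subst he; exact ⟨rfl, h.tail_unique h'⟩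
  obtain ⟨ξ | ξ, _⟩ := q <;> obtain ⟨u | u, _⟩ := p <;> obtain ⟨u' | u', _⟩ := p' <;>
    obtain ⟨-, hm⟩ := h <;> obtain ⟨-, hm'⟩ := h'
  all_goals first | exact hm.elim | exact hm'.elim | skip
  · exact (List.cons.inj (hm.2.symm.trans hm'.2)).1
  · exact (hm.1 0 (by simp)).symm.trans (hm'.1 0 (by simp))

theorem isInfinite_iff {μ : G.FinPath} {p x : G.BPath} (h : IsCat μ p x) :
    x.IsInfinite ↔ p.IsInfinite := by
  obtain ⟨q | q, _⟩ := p <;> obtain ⟨ξ | ξ, _⟩ := x <;> obtain ⟨-, hm⟩ := h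
  all_goals first | exact hm.elim | simp [BPath.IsInfinite]

theorem iff_of_forall_singleE {P : G.BPath → Prop}
    (hP : ∀ e p q, IsCat (singleE G e) p q → (P p ↔ P q)) {μ : G.FinPath} {t x : G.BPath}
    (h : IsCat μ t x) : P t ↔ P x := by
  obtain ⟨l, hl⟩ : ∃ l, μ.edges = l := ⟨_, rfl⟩
  induction l generalizing μ x with
  | nil => rw [h.eq_of_edges_eq_nil hl]
  | cons e es ih =>
    obtain ⟨x', h₁, h₂⟩ := h.exists_tail hl
    exact (ih h₁ rfl).trans (hP _ _ _ h₂)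

end IsCat

theorem isInfinite_of_isCat_self {c : G.FinPath} {p : G.BPath} (h : IsCat c p p)
    (hc : 0 < c.length) : p.IsInfinite := by
  obtain ⟨q | q, _⟩ := p
  · have := congrArg List.length h.2.2
    simp only [List.length_append] at this
    exact absurd hc (by unfold FinPath.length; omega)
  · exact ⟨q, rfl⟩

theorem exists_isCat_singleE_tail {y : G.BPath} {w : G.InfPath} (hy : y.1 = Sum.inr w) :
    ∃ z : G.BPath, z.1 = Sum.inr w.tail ∧ IsCat (singleE G (w.edges 0)) z y := by
  obtain ⟨_, _⟩ := y
  subst hy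
  refine ⟨⟨Sum.inr w.tail, fun μ h => by cases h⟩, rfl, w.chain 0, ?_, fun i => ?_⟩
  · rintro (_ | i) hi
    · rfl
    · simp at hi
  · show w.edges (1 + i) = w.edges (i + 1)
    rw [Nat.add_comm]

theorem mem_orbit_self (x : G.BPath) : x ∈ orbit x :=
  have h := IsCat.self_of_edges_eq_nil (p := x) (μ := vertexPath G x.src) rfl
    (FinPath.rng_of_edges_eq_nil rfl)
  ⟨0, _, _, x, h, h, sub_self _⟩

theorem IsCat.mem_orbit_iff {e : G.E} {p q y : G.BPath} (h : IsCat (singleE G e) p q) :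
    p ∈ orbit y ↔ q ∈ orbit y := by
  constructor
  · rintro ⟨k, α, β, r, hα, hβ, hk⟩
    have hs : (singleE G e).rng = α.src := h.1.trans hα.src_eq
    refine ⟨k + 1, (singleE G e).append α hs, β, r, h.append hα hs, hβ, ?_⟩
    simp only [FinPath.length, FinPath.append_edges, List.length_append, singleE_edges,
      List.length_singleton] at hk ⊢
    omega
  · rintro ⟨k, α, β, r, hα, hβ, hk⟩
    cases hα' : α.edges with
    | nil =>
      obtain rfl := hα.eq_of_edges_eq_nil hα'
      have hs : β.rng = (singleE G e).src := hβ.1.trans h.src_eq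
      refine ⟨-(β.length + 1), vertexPath G p.src, β.append (singleE G e) hs, p,
        self_of_edges_eq_nil rfl (FinPath.rng_of_edges_eq_nil rfl), hβ.append h hs, ?_⟩
      simp [FinPath.length, vertexPath]
    | cons e' es =>
      obtain ⟨q', hq₁, hq₂⟩ := hα.exists_tail hα'
      obtain ⟨-, rfl⟩ := h.singleE_inj hq₂
      refine ⟨k - 1, α.tail e' es hα', β, r, hq₁, hβ, ?_⟩
      simp only [FinPath.length, FinPath.tail_edges, hα', List.length_cons] at hk ⊢
      push_cast at hk
      omega

theorem orbit_iff_of_forall_singleE {P : G.BPath → Prop}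
    (hP : ∀ e p q, IsCat (singleE G e) p q → (P p ↔ P q)) {x y z : G.BPath}
    (hy : y ∈ orbit x) (hz : z ∈ orbit x) : P y ↔ P z := by
  obtain ⟨-, α, β, r, hα, hβ, -⟩ := hy
  obtain ⟨-, γ, δ, s, hγ, hδ, -⟩ := hz
  calc P y ↔ P r := (IsCat.iff_of_forall_singleE hP hα).symm
    _ ↔ P x := IsCat.iff_of_forall_singleE hP hβ
    _ ↔ P s := (IsCat.iff_of_forall_singleE hP hδ).symm
    _ ↔ P z := IsCat.iff_of_forall_singleE hP hγ

theorem BPath.IsInfinite.mem_orbit {x y : G.BPath} (hx : x.IsInfinite) (hy : y ∈ orbit x) :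
    y.IsInfinite := by
  obtain ⟨-, α, β, r, hα, hβ, -⟩ := hy
  exact hα.isInfinite_iff.mpr (hβ.isInfinite_iff.mp hx)

end DirGraph

namespace DirGraph.ChenSpec

variable {G : DirGraph} {K : Type} [Field K] {a : G.E → K} {x : G.BPath}
  {M : Type} [AddCommGroup M] [Module K M] [Module (LPA G K) M] (sp : ChenSpec G K a x M)

theorem repr_ghost_smul_basis (e : G.E) (z w : orbit x) :
    sp.basis.repr (ofG G K e • sp.basis w) z =
      if IsCat (singleE G e) (z : G.BPath) w then (a e)⁻¹ else 0 := by
  by_cases hw : ∃ p, IsCat (singleE G e) p (w : G.BPath)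
  · obtain ⟨p, hp⟩ := hw
    have hpo : p ∈ orbit x := hp.mem_orbit_iff.mpr w.2
    have hpz : (⟨p, hpo⟩ : orbit x) = z ↔ IsCat (singleE G e) z w :=
      ⟨by rintro rfl; exact hp, fun h => Subtype.ext (hp.tail_unique h)⟩
    rw [sp.act_g e ⟨p, hpo⟩ w hp, map_smul, Module.Basis.repr_self, Finsupp.smul_apply,
      Finsupp.single_apply]
    simp only [hpz, smul_eq_mul, mul_ite, mul_one, mul_zero]
  · rw [sp.act_g_zero e w hw, map_zero, Finsupp.zero_apply, if_neg fun h => hw ⟨z, h⟩]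

variable [IsScalarTower K (LPA G K) M]

theorem repr_ghost_smul (m : M) {e : G.E} {z y : orbit x}
    (h : IsCat (singleE G e) (z : G.BPath) y) :
    sp.basis.repr (ofG G K e • m) z = (a e)⁻¹ * sp.basis.repr m y := by
  have := sp.basis.ext
    (f₁ := Finsupp.lapply z ∘ₗ sp.basis.repr.toLinearMap ∘ₗ
      DistribSMul.toLinearMap K M (ofG G K e))
    (f₂ := (a e)⁻¹ • (Finsupp.lapply y ∘ₗ sp.basis.repr.toLinearMap)) fun w => by
      have hwy : IsCat (singleE G e) (z : G.BPath) w ↔ w = y :=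
        ⟨fun hw => Subtype.ext (hw.concat_unique h), by rintro rfl; exact h⟩
      simp [repr_ghost_smul_basis, hwy, Finsupp.single_apply, eq_comm]
  simpa using LinearMap.congr_fun this m

theorem repr_ghost_smul_eq_zero (m : M) {e : G.E} {z : orbit x}
    (hz : ¬ ∃ y, IsCat (singleE G e) (z : G.BPath) y) :
    sp.basis.repr (ofG G K e • m) z = 0 := by
  have := sp.basis.ext
    (f₁ := Finsupp.lapply z ∘ₗ sp.basis.repr.toLinearMap ∘ₗ
      DistribSMul.toLinearMap K M (ofG G K e))
    (f₂ := 0) fun w => by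
      have hzw : ¬ IsCat (singleE G e) (z : G.BPath) w := fun h => hz ⟨_, h⟩
      simp [repr_ghost_smul_basis, hzw]
  simpa using LinearMap.congr_fun this m

theorem card_support_ghost_smul_le (e : G.E) (m : M) (s : Finset (orbit x))
    (hs : ∀ y ∈ (sp.basis.repr m).support,
      (∃ z, IsCat (singleE G e) z (y : G.BPath)) → y ∈ s) :
    (sp.basis.repr (ofG G K e • m)).support.card ≤ s.card := by
  refine Finset.card_le_card_of_forall_subsingleton
    (fun z y : orbit x => IsCat (singleE G e) (z : G.BPath) y) (fun z hz => ?_)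
    fun y _ z₁ hz₁ z₂ hz₂ => Subtype.ext (hz₁.2.tail_unique hz₂.2)
  by_cases hy : ∃ y, IsCat (singleE G e) (z : G.BPath) y
  · obtain ⟨y, hzy⟩ := hy
    have hy : y ∈ orbit x := hzy.mem_orbit_iff.mp z.2
    have hmy : sp.basis.repr m ⟨y, hy⟩ ≠ 0 := by
      intro h0
      rw [Finsupp.mem_support_iff, sp.repr_ghost_smul m (y := ⟨y, hy⟩) hzy, h0, mul_zero] at hz
      exact hz rfl
    exact ⟨⟨y, hy⟩, hs _ (Finsupp.mem_support_iff.mpr hmy) ⟨_, hzy⟩, hzy⟩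
  · exact absurd (sp.repr_ghost_smul_eq_zero m hy) (Finsupp.mem_support_iff.mp hz)

theorem exists_repr_ghost_smul_ne_zero {m : M} {i : orbit x} {w : G.InfPath}
    (hw : (i : G.BPath).1 = Sum.inr w) (hi : sp.basis.repr m i ≠ 0) :
    ∃ z : orbit x, (z : G.BPath).1 = Sum.inr w.tail ∧
      sp.basis.repr (ofG G K (w.edges 0) • m) z ≠ 0 := by
  obtain ⟨z, hz, hzi⟩ := exists_isCat_singleE_tail hw
  refine ⟨⟨z, hzi.mem_orbit_iff.mpr i.2⟩, hz, ?_⟩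
  rw [sp.repr_ghost_smul m hzi]
  exact mul_ne_zero (inv_ne_zero (sp.tau_ne _)) hi

theorem exists_card_support_lt (N : Submodule (LPA G K) M) (n : ℕ) {m : M} (hm : m ∈ N)
    {i j : orbit x} {wi wj : G.InfPath} (hwi : (i : G.BPath).1 = Sum.inr wi)
    (hwj : (j : G.BPath).1 = Sum.inr wj) (hi : sp.basis.repr m i ≠ 0)
    (hj : sp.basis.repr m j ≠ 0) (hagree : ∀ k < n, wi.edges k = wj.edges k)
    (hdiff : wi.edges n ≠ wj.edges n) :
    ∃ m' ∈ N, m' ≠ 0 ∧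
      (sp.basis.repr m').support.card < (sp.basis.repr m).support.card := by
  induction n generalizing m i j wi wj with
  | zero =>
    obtain ⟨z, -, hz⟩ := sp.exists_repr_ghost_smul_ne_zero hwi hi
    refine ⟨_, N.smul_mem _ hm, fun h0 => hz (by rw [h0, map_zero, Finsupp.zero_apply]), ?_⟩
    refine (sp.card_support_ghost_smul_le _ m _ fun y hy ⟨p, hp⟩ =>
      Finset.mem_erase.mpr ⟨?_, hy⟩).trans_lt
        (Finset.card_erase_lt_of_mem (Finsupp.mem_support_iff.mpr hj))
    rintro rfl
    obtain ⟨q, -, hq⟩ := exists_isCat_singleE_tail hwj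
    exact hdiff (hp.singleE_inj hq).1
  | succ n ih =>
    obtain ⟨zi, hzi, hi'⟩ := sp.exists_repr_ghost_smul_ne_zero hwi hi
    obtain ⟨zj, hzj, hj'⟩ := sp.exists_repr_ghost_smul_ne_zero hwj hj
    rw [← hagree 0 n.succ_pos] at hj'
    obtain ⟨m', hm', hm'0, hlt⟩ := ih (N.smul_mem _ hm) hzi hzj hi' hj'
      (fun k hk => hagree (k + 1) (by omega)) hdiff
    exact ⟨m', hm', hm'0, hlt.trans_le (sp.card_support_ghost_smul_le _ m _ fun y hy _ => hy)⟩

theorem exists_basis_mem (hx : x.IsInfinite) (N : Submodule (LPA G K) M) {m : M} (hm : m ∈ N)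
    (hm0 : m ≠ 0) : ∃ q, sp.basis q ∈ N := by
  induction hn : (sp.basis.repr m).support.card using Nat.strong_induction_on generalizing m
    with | _ n ih
  by_cases h1 : n ≤ 1
  · have hpos : 0 < n := hn ▸ Finset.card_pos.mpr (Finsupp.support_nonempty_iff.mpr
      (sp.basis.repr.map_ne_zero_iff.mpr hm0))
    obtain ⟨i, c, hc, hmi⟩ := Finsupp.card_support_eq_one'.mp (hn.trans (by omega))
    have hbi : sp.basis i = c⁻¹ • m := by
      rw [← sp.basis.repr.symm_apply_apply m, hmi, Module.Basis.repr_symm_single,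
        inv_smul_smul₀ hc]
    exact ⟨i, hbi ▸ N.smul_of_tower_mem c⁻¹ hm⟩
  obtain ⟨i, hi, j, hj, hij⟩ := Finset.one_lt_card.mp (hn ▸ not_le.mp h1)
  obtain ⟨wi, hwi⟩ := hx.mem_orbit i.2
  obtain ⟨wj, hwj⟩ := hx.mem_orbit j.2
  have hdiff : ∃ n, wi.edges n ≠ wj.edges n := by
    by_contra! h
    exact hij (Subtype.ext (Subtype.ext (by rw [hwi, hwj, InfPath.ext (funext h)])))
  obtain ⟨m', hm', hm'0, hlt⟩ := sp.exists_card_support_lt N _ hm hwi hwj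
    (Finsupp.mem_support_iff.mp hi) (Finsupp.mem_support_iff.mp hj)
    (fun k hk => not_not.mp (Nat.find_min hdiff hk)) (Nat.find_spec hdiff)
  exact ih _ (hn ▸ hlt) hm' hm'0 rfl

theorem exists_basis_mem_iff_of_isCat_singleE (N : Submodule (LPA G K) M) {e : G.E}
    {u v : G.BPath} (h : IsCat (singleE G e) u v) :
    (∃ hu : u ∈ orbit x, sp.basis ⟨u, hu⟩ ∈ N) ↔ ∃ hv : v ∈ orbit x, sp.basis ⟨v, hv⟩ ∈ N := by
  constructor
  · rintro ⟨hu, hb⟩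
    refine ⟨h.mem_orbit_iff.mp hu, ?_⟩
    rw [← inv_smul_smul₀ (sp.tau_ne e) (sp.basis _), ← sp.act_e e ⟨u, hu⟩ _ h]
    exact N.smul_of_tower_mem _ (N.smul_mem _ hb)
  · rintro ⟨hv, hb⟩
    refine ⟨h.mem_orbit_iff.mpr hv, ?_⟩
    rw [← smul_inv_smul₀ (sp.tau_ne e) (sp.basis _), ← sp.act_g e _ ⟨v, hv⟩ h]
    exact N.smul_of_tower_mem _ (N.smul_mem _ hb)

theorem basis_mem_of_basis_mem (N : Submodule (LPA G K) M) {q : orbit x}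
    (hq : sp.basis q ∈ N) (y : orbit x) : sp.basis y ∈ N :=
  ((orbit_iff_of_forall_singleE (fun _ _ _ => sp.exists_basis_mem_iff_of_isCat_singleE N)
    q.2 y.2).mp ⟨q.2, hq⟩).2

theorem isSimpleModule (sp : ChenSpec G K a x M) (hx : x.IsInfinite) :
    IsSimpleModule (LPA G K) M := by
  have : Nontrivial M := ⟨_, 0, sp.basis.ne_zero ⟨x, mem_orbit_self x⟩⟩
  refine { eq_bot_or_eq_top := fun N => or_iff_not_imp_left.mpr fun hN => ?_ }
  obtain ⟨m, hm, hm0⟩ := N.ne_bot_iff.mp hN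
  obtain ⟨q, hq⟩ := sp.exists_basis_mem hx N hm hm0
  refine eq_top_iff.mpr fun m' _ => Submodule.span_le (p := N.restrictScalars K) |>.mpr ?_
    (sp.basis.mem_span m')
  rintro _ ⟨y, rfl⟩
  exact sp.basis_mem_of_basis_mem N hq y

end DirGraph.ChenSpec

open DirGraph

/-- for a simple closed path `c` and `a ∈ (K^*)^{E¹}`, the twisted Chen
module `V_{[c^∞]}^a` is a simple `L_K(E)`-module. Here `c^∞` is the unique boundary path
`p₀` with `p₀ = c p₀`. -/
theorem stmt_7 (G : DirGraph) (K : Type) [Field K]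
    (c : G.FinPath) (hc : c.IsSimpleClosed) (a : G.E → K)
    (p₀ : G.BPath) (hp : IsCat c p₀ p₀)
    (M : Type) [AddCommGroup M] [Module K M] [Module (LPA G K) M]
    [IsScalarTower K (LPA G K) M]
    (sp : ChenSpec G K a p₀ M) :
    IsSimpleModule (LPA G K) M :=
  sp.isSimpleModule (isInfinite_of_isCat_self hp hc.1.1)
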